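/- Under the normalized δ-approximate optimality condition — for all (θ,θ̄) ∈ Θ₀×Θ₁, (θ̃₁−θ̃₀)ᵀΣ⁻¹(θ−θ̃₀) + (θ̃₀−θ̃₁)ᵀΣ⁻¹(θ̄−θ̃₁) ≤ δ·‖Σ^{−1/2}(θ̃₀−θ̃₁)‖₂² — together with the exact first-order optimality condition for (θ₀,θ₁) (as in the unnormalized case with δ = 0), one has ‖Σ^{−1/2}(θ₀−θ₁)‖₂/(1+√δ) ≤ ‖Σ^{−1/2}(θ̃₀−θ̃₁)‖₂ ≤ ‖Σ^{−1/2}(θ₀−θ₁)‖₂/(1−√δ). -/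

import Mathlib

/-!
Write `u = Σ^{-1/2}(θ₀ - θ₁)` and `v = Σ^{-1/2}(θ̃₀ - θ̃₁)`. Testing the exact optimality
condition at `(θ̃₀, θ̃₁)` gives `⟪u, u - v⟫ ≤ 0`, and testing the approximate one at `(θ₀, θ₁)`
gives `⟪v, v - u⟫ ≤ δ ‖v‖²`. By Cauchy–Schwarz the first yields `‖u‖ ≤ ‖v‖` and the second
`(1 - δ) ‖v‖ ≤ ‖u‖`; finally `1 - √δ ≤ 1 - δ` for `δ ≤ 1`.
-/

open Matrix RealInnerProductSpace WithLp

section InnerProductSpace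

variable {E : Type*} [NormedAddCommGroup E] [InnerProductSpace ℝ E]

lemma norm_le_norm_of_inner_sub_nonpos {u v : E} (h : ⟪u, u - v⟫ ≤ 0) : ‖u‖ ≤ ‖v‖ := by
  rw [inner_sub_right, real_inner_self_eq_norm_sq] at h
  have hcs := real_inner_le_norm u v
  by_contra! hlt
  nlinarith [norm_nonneg v]

lemma one_sub_mul_norm_le_norm_of_inner_sub_le {u v : E} {c : ℝ}
    (h : ⟪v, v - u⟫ ≤ c * ‖v‖ ^ 2) : (1 - c) * ‖v‖ ≤ ‖u‖ := by
  rw [inner_sub_right, real_inner_self_eq_norm_sq] at h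
  have hcs := real_inner_le_norm v u
  rcases (norm_nonneg v).eq_or_lt with hv | hv
  · rw [← hv, mul_zero]
    exact norm_nonneg u
  · have : (1 - c) * ‖v‖ * ‖v‖ ≤ ‖u‖ * ‖v‖ := by nlinarith
    exact le_of_mul_le_mul_right this hv

theorem norm_div_one_add_sqrt_le_and_le_div_one_sub_sqrt {u v : E} {δ : ℝ} (hδ1 : δ < 1)
    (hu : ⟪u, u - v⟫ ≤ 0) (hv : ⟪v, v - u⟫ ≤ δ * ‖v‖ ^ 2) :
    ‖u‖ / (1 + √δ) ≤ ‖v‖ ∧ ‖v‖ ≤ ‖u‖ / (1 - √δ) := by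
  have huv := norm_le_norm_of_inner_sub_nonpos hu
  have hvu := one_sub_mul_norm_le_norm_of_inner_sub_le hv
  have hsqrt_lt : √δ < 1 := by
    rw [Real.sqrt_lt' one_pos]
    linarith
  have hδ_le : δ ≤ √δ := Real.le_sqrt_self_iff.2 hδ1.le
  constructor
  · exact (div_le_self (norm_nonneg u) (by linarith [Real.sqrt_nonneg δ])).trans huv
  · rw [le_div_iff₀ (by linarith)]
    calc ‖v‖ * (1 - √δ) ≤ (1 - δ) * ‖v‖ := by nlinarith [norm_nonneg v]
      _ ≤ ‖u‖ := hvu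

end InnerProductSpace

section Matrix

variable {m n : Type*} [Fintype m] [Fintype n]

lemma sqrt_sum_sq_eq_norm_toLp (x : n → ℝ) : √(∑ i, x i ^ 2) = ‖toLp 2 x‖ := by
  rw [EuclideanSpace.norm_eq]
  simp

lemma dotProduct_transpose_mul_mulVec (B : Matrix m n ℝ) (a b : n → ℝ) :
    a ⬝ᵥ (Bᵀ * B) *ᵥ b = ⟪toLp 2 (B *ᵥ a), toLp 2 (B *ᵥ b)⟫ := by
  rw [EuclideanSpace.inner_toLp_toLp, star_trivial, ← mulVec_mulVec, dotProduct_mulVec,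
    vecMul_transpose, dotProduct_comm]

lemma sub_dotProduct_mulVec_add_sub_dotProduct_mulVec (M : Matrix n n ℝ)
    (a b x y : n → ℝ) :
    (b - a) ⬝ᵥ M *ᵥ (x - a) + (a - b) ⬝ᵥ M *ᵥ (y - b) = (a - b) ⬝ᵥ M *ᵥ ((a - b) - (x - y)) := by
  simp only [mulVec_sub, dotProduct_sub, sub_dotProduct]
  ring

end Matrix

theorem stmt_5_general {d : ℕ} (S B : Matrix (Fin d) (Fin d) ℝ)
    (hB : B.PosDef) (hBB : B * B = S⁻¹)
    (Θ₀ Θ₁ : Set (Fin d → ℝ))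
    (θ₀ θ₁ θt₀ θt₁ : Fin d → ℝ) (hθ₀ : θ₀ ∈ Θ₀) (hθ₁ : θ₁ ∈ Θ₁)
    (hθt₀ : θt₀ ∈ Θ₀) (hθt₁ : θt₁ ∈ Θ₁) (δ : ℝ) (hδ1 : δ < 1)
    (hexact : ∀ θ ∈ Θ₀, ∀ θ' ∈ Θ₁,
      (θ₁ - θ₀) ⬝ᵥ (S⁻¹).mulVec (θ - θ₀) + (θ₀ - θ₁) ⬝ᵥ (S⁻¹).mulVec (θ' - θ₁) ≤ 0)
    (happrox : ∀ θ ∈ Θ₀, ∀ θ' ∈ Θ₁,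
      (θt₁ - θt₀) ⬝ᵥ (S⁻¹).mulVec (θ - θt₀) + (θt₀ - θt₁) ⬝ᵥ (S⁻¹).mulVec (θ' - θt₁) ≤
        δ * Real.sqrt (∑ i, (B.mulVec (θt₀ - θt₁)) i ^ 2) ^ 2) :
    Real.sqrt (∑ i, (B.mulVec (θ₀ - θ₁)) i ^ 2) / (1 + Real.sqrt δ) ≤
      Real.sqrt (∑ i, (B.mulVec (θt₀ - θt₁)) i ^ 2) ∧
    Real.sqrt (∑ i, (B.mulVec (θt₀ - θt₁)) i ^ 2) ≤
      Real.sqrt (∑ i, (B.mulVec (θ₀ - θ₁)) i ^ 2) / (1 - Real.sqrt δ) := by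
  have hM : S⁻¹ = Bᵀ * B := by
    rw [← hBB, (isHermitian_iff_isSymm.1 hB.isHermitian).eq]
  set u : EuclideanSpace ℝ (Fin d) := toLp 2 (B *ᵥ (θ₀ - θ₁))
  set v : EuclideanSpace ℝ (Fin d) := toLp 2 (B *ᵥ (θt₀ - θt₁))
  have hu : ⟪u, u - v⟫ ≤ 0 := by
    have h := hexact θt₀ hθt₀ θt₁ hθt₁
    rwa [sub_dotProduct_mulVec_add_sub_dotProduct_mulVec, hM, dotProduct_transpose_mul_mulVec,
      mulVec_sub B (θ₀ - θ₁), toLp_sub] at h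
  have hv : ⟪v, v - u⟫ ≤ δ * ‖v‖ ^ 2 := by
    have h := happrox θ₀ hθ₀ θ₁ hθ₁
    rwa [sub_dotProduct_mulVec_add_sub_dotProduct_mulVec, hM, dotProduct_transpose_mul_mulVec,
      mulVec_sub B (θt₀ - θt₁), toLp_sub, sqrt_sum_sq_eq_norm_toLp] at h
  simpa only [sqrt_sum_sq_eq_norm_toLp] using
    norm_div_one_add_sqrt_le_and_le_div_one_sub_sqrt hδ1 hu hv

/-- under the *normalized* δ-approximate optimality condition together with
the exact first-order optimality condition for `(θ₀, θ₁)`, the norm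
`‖Σ^{-1/2}(θ̃₀−θ̃₁)‖` is sandwiched between `‖Σ^{-1/2}(θ₀−θ₁)‖/(1+√δ)` and
`‖Σ^{-1/2}(θ₀−θ₁)‖/(1−√δ)`.  `B` is the inverse square root of `Σ`. -/
theorem stmt_5 {d : ℕ} (S B : Matrix (Fin d) (Fin d) ℝ)
    (hS : S.PosDef) (hB : B.PosDef) (hBB : B * B = S⁻¹)
    (Θ₀ Θ₁ : Set (Fin d → ℝ)) (h₀ : Θ₀.Nonempty) (h₁ : Θ₁.Nonempty)
    (hc₀ : Convex ℝ Θ₀) (hc₁ : Convex ℝ Θ₁)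
    (θ₀ θ₁ θt₀ θt₁ : Fin d → ℝ) (hθ₀ : θ₀ ∈ Θ₀) (hθ₁ : θ₁ ∈ Θ₁)
    (hθt₀ : θt₀ ∈ Θ₀) (hθt₁ : θt₁ ∈ Θ₁) (δ : ℝ) (hδ : 0 < δ) (hδ1 : δ < 1)
    (hexact : ∀ θ ∈ Θ₀, ∀ θ' ∈ Θ₁,
      (θ₁ - θ₀) ⬝ᵥ (S⁻¹).mulVec (θ - θ₀) + (θ₀ - θ₁) ⬝ᵥ (S⁻¹).mulVec (θ' - θ₁) ≤ 0)
    (happrox : ∀ θ ∈ Θ₀, ∀ θ' ∈ Θ₁,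
      (θt₁ - θt₀) ⬝ᵥ (S⁻¹).mulVec (θ - θt₀) + (θt₀ - θt₁) ⬝ᵥ (S⁻¹).mulVec (θ' - θt₁) ≤
        δ * Real.sqrt (∑ i, (B.mulVec (θt₀ - θt₁)) i ^ 2) ^ 2) :
    Real.sqrt (∑ i, (B.mulVec (θ₀ - θ₁)) i ^ 2) / (1 + Real.sqrt δ) ≤
      Real.sqrt (∑ i, (B.mulVec (θt₀ - θt₁)) i ^ 2) ∧
    Real.sqrt (∑ i, (B.mulVec (θt₀ - θt₁)) i ^ 2) ≤
      Real.sqrt (∑ i, (B.mulVec (θ₀ - θ₁)) i ^ 2) / (1 - Real.sqrt δ) :=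
  stmt_5_general S B hB hBB Θ₀ Θ₁ θ₀ θ₁ θt₀ θt₁ hθ₀ hθ₁ hθt₀ hθt₁ δ hδ1 hexact happrox
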